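/- Let x ∈ ℝ^d be written in blocks x = (x₁,…,x_m) with x_i ∈ ℝ^{d̄}, and set x₀ = x_{m+1} = 0 ∈ ℝ^{d̄}. Then: (a) writing x̂ = AᵀAx in blocks x̂ = (x̂₁,…,x̂_m), we have supp(x̂_i) ⊆ supp(x_{i−1}) ∪ supp(x_i) ∪ supp(x_{i+1}) for all i = 1,…,m; (b) for any η > 0, writing x̃ = prox_{ηg}(x) in blocks x̃ = (x̃₁,…,x̃_m), we have supp(x̃_i) ⊆ supp(x_{i−1}) ∪ supp(x_i) ∪ supp(x_{i+1}) for all i = 1,…,m. -/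

import Mathlib

open Real Matrix Finset
open scoped Kronecker

noncomputable section

def Psi (u : ℝ) : ℝ := if u ≤ 0 then 0 else 1 - Real.exp (-u ^ 2)
def Phi (v : ℝ) : ℝ := 4 * Real.arctan v + 2 * π
def zc {d : ℕ} (z : EuclideanSpace ℝ (Fin d)) (j : ℕ) : ℝ :=
  if h : 1 ≤ j ∧ j - 1 < d then z ⟨j - 1, h.2⟩ else 0
def phi {d : ℕ} (z : EuclideanSpace ℝ (Fin d)) (j : ℕ) : ℝ :=
  if j = 1 then -(Psi 1 * Phi (zc z 1))
  else Psi (-zc z (j - 1)) * Phi (-zc z j) - Psi (zc z (j - 1)) * Phi (zc z j)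
def hfun (m i : ℕ) {d : ℕ} (z : EuclideanSpace ℝ (Fin d)) : ℝ :=
  if i ≤ m / 3 then phi z 1 + 3 * ∑ j ∈ Finset.Icc 1 (d / 2), phi z (2 * j)
  else if i ≤ 2 * m / 3 then phi z 1
  else phi z 1 + 3 * ∑ j ∈ Finset.Icc 1 (d / 2), phi z (2 * j + 1)
def ff (m : ℕ) (Lf ε : ℝ) (i : ℕ) {d : ℕ} (z : EuclideanSpace ℝ (Fin d)) : ℝ :=
  300 * π * ε ^ 2 / (m * Lf) * hfun m i ((Real.sqrt m * Lf / (150 * π * ε)) • z)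
def blkN {m d : ℕ} (x : EuclideanSpace ℝ (Fin m × Fin d)) (i : ℕ) :
    EuclideanSpace ℝ (Fin d) :=
  WithLp.toLp 2 (fun j => if h : 1 ≤ i ∧ i - 1 < m then x (⟨i - 1, h.2⟩, j) else 0)
def f0 (m : ℕ) (Lf ε : ℝ) {d : ℕ} (x : EuclideanSpace ℝ (Fin m × Fin d)) : ℝ :=
  ∑ i ∈ Finset.Icc 1 m, ff m Lf ε i (blkN x i)
def l1norm {ι : Type*} [Fintype ι] (x : ι → ℝ) : ℝ := ∑ i, |x i|
def Jmat (p : ℕ) : Matrix (Fin (p - 1)) (Fin p) ℝ :=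
  Matrix.of fun i j => if j.val = i.val then -1 else if j.val = i.val + 1 then 1 else 0
def Hmat (m d : ℕ) (Lf : ℝ) : Matrix (Fin (m - 1) × Fin d) (Fin m × Fin d) ℝ :=
  ((m : ℝ) * Lf) • (Jmat m ⊗ₖ (1 : Matrix (Fin d) (Fin d) ℝ))
def Mset (m₁ m₂ : ℕ) : Finset ℕ := (Finset.Icc 1 (3 * m₂ - 1)).image (· * m₁)
def JM (m₁ m₂ : ℕ) : Matrix (Fin (3 * m₂ - 1)) (Fin (3 * m₁ * m₂)) ℝ :=
  Matrix.of fun i j =>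
    if j.val + 1 = (i.val + 1) * m₁ then -1
    else if j.val = (i.val + 1) * m₁ then 1 else 0
def Abar (m₁ m₂ d : ℕ) (Lf : ℝ) :
    Matrix (Fin (3 * m₂ - 1) × Fin d) (Fin (3 * m₁ * m₂) × Fin d) ℝ :=
  ((3 * m₁ * m₂ : ℕ) * Lf) • (JM m₁ m₂ ⊗ₖ (1 : Matrix (Fin d) (Fin d) ℝ))
abbrev MCidx (m₁ m₂ : ℕ) := {k : Fin (3 * m₁ * m₂ - 1) // k.val + 1 ∉ Mset m₁ m₂}
def JMC (m₁ m₂ : ℕ) : Matrix (MCidx m₁ m₂) (Fin (3 * m₁ * m₂)) ℝ :=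
  Matrix.of fun k j => Jmat (3 * m₁ * m₂) k.val j
def Amat (m₁ m₂ d : ℕ) (Lf : ℝ) :
    Matrix (MCidx m₁ m₂ × Fin d) (Fin (3 * m₁ * m₂) × Fin d) ℝ :=
  ((3 * m₁ * m₂ : ℕ) * Lf) • (JMC m₁ m₂ ⊗ₖ (1 : Matrix (Fin d) (Fin d) ℝ))
def mvec {ι κ : Type*} [Fintype κ] (M : Matrix ι κ ℝ) (x : EuclideanSpace ℝ κ) :
    EuclideanSpace ℝ ι :=
  WithLp.toLp 2 (fun i => ∑ j, M i j * x j)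
def sNorm {ι κ : Type*} [Fintype ι] [Fintype κ] [DecidableEq κ] (M : Matrix ι κ ℝ) : ℝ :=
  ‖LinearMap.toContinuousLinearMap (Matrix.toEuclideanLin M)‖
def lamMax {ι : Type*} [Fintype ι] [DecidableEq ι] (M : Matrix ι ι ℝ) : ℝ :=
  sSup (spectrum ℝ M)
def lamMinPos {ι : Type*} [Fintype ι] [DecidableEq ι] (M : Matrix ι ι ℝ) : ℝ :=
  sInf (spectrum ℝ M ∩ Set.Ioi 0)
def condNum {ι κ : Type*} [Fintype ι] [DecidableEq ι] [Fintype κ] (M : Matrix ι κ ℝ) : ℝ :=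
  Real.sqrt (lamMax (M * Mᵀ) / lamMinPos (M * Mᵀ))
def gfun (m₁ m₂ d : ℕ) (β : ℝ) (x : EuclideanSpace ℝ (Fin (3 * m₁ * m₂) × Fin d)) : ℝ :=
  β * ∑ i ∈ Mset m₁ m₂, l1norm (fun j => blkN x i j - blkN x (i + 1) j)
def gbar (m₁ m₂ d : ℕ) (Lf β : ℝ)
    (y : EuclideanSpace ℝ (Fin (3 * m₂ - 1) × Fin d)) : ℝ :=
  β / ((3 * m₁ * m₂ : ℕ) * Lf) * l1norm y
def IsProx {E : Type*} [NormedAddCommGroup E] [InnerProductSpace ℝ E]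
    (η : ℝ) (ψ : E → ℝ) (x p : E) : Prop :=
  ∀ y, ψ p + ‖p - x‖ ^ 2 / (2 * η) ≤ ψ y + ‖y - x‖ ^ 2 / (2 * η)
def subdiff {E : Type*} [NormedAddCommGroup E] [InnerProductSpace ℝ E]
    (ψ : E → ℝ) (x : E) : Set E :=
  {v | ∀ y, ψ x + (inner ℝ v (y - x) : ℝ) ≤ ψ y}
def suppSub {d : ℕ} (z : EuclideanSpace ℝ (Fin d)) (k : ℕ) : Prop :=
  ∀ j : Fin d, z j ≠ 0 → j.val + 1 ≤ k

/-- x is an ε̂-stationary point of instance 𝒫. -/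
def IsStatP (m₁ m₂ d : ℕ) (Lf ε β εh : ℝ)
    (x : EuclideanSpace ℝ (Fin (3 * m₁ * m₂) × Fin d)) : Prop :=
  ∃ γ : EuclideanSpace ℝ (MCidx m₁ m₂ × Fin d), ∃ ξ ∈ subdiff (gfun m₁ m₂ d β) x,
    ‖gradient (f0 (3 * m₁ * m₂) Lf ε) x + mvec (Amat m₁ m₂ d Lf)ᵀ γ + ξ‖ ≤ εh ∧
    ‖mvec (Amat m₁ m₂ d Lf) x‖ ≤ εh

/-- (x, y) is an ε̂-stationary point of the splitting reformulation (SP). -/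
def IsStatSP (m₁ m₂ d : ℕ) (Lf ε β εh : ℝ)
    (x : EuclideanSpace ℝ (Fin (3 * m₁ * m₂) × Fin d))
    (y : EuclideanSpace ℝ (Fin (3 * m₂ - 1) × Fin d)) : Prop :=
  ∃ z₁ : EuclideanSpace ℝ (Fin (3 * m₂ - 1) × Fin d),
    ∃ z₂ : EuclideanSpace ℝ (MCidx m₁ m₂ × Fin d),
      Metric.infDist 0 ((· - z₁) '' subdiff (gbar m₁ m₂ d Lf β) y) ≤ εh ∧
      ‖gradient (f0 (3 * m₁ * m₂) Lf ε) x + mvec (Abar m₁ m₂ d Lf)ᵀ z₁ +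
        mvec (Amat m₁ m₂ d Lf)ᵀ z₂‖ ≤ εh ∧
      ‖y - mvec (Abar m₁ m₂ d Lf) x‖ ≤ εh ∧ ‖mvec (Amat m₁ m₂ d Lf) x‖ ≤ εh

/-- The sequence X follows Algorithm Class 1 on instance 𝒫. -/
def FollowsAC1 (m₁ m₂ d : ℕ) (Lf ε β : ℝ)
    (X : ℕ → EuclideanSpace ℝ (Fin (3 * m₁ * m₂) × Fin d)) : Prop :=
  X 0 = 0 ∧ ∀ t, 1 ≤ t → ∃ η : ℝ, 0 < η ∧
    ∃ ξ ∈ Submodule.span ℝ (⋃ s ∈ Set.Iio t,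
      ({X s, gradient (f0 (3 * m₁ * m₂) Lf ε) (X s),
        mvec ((Amat m₁ m₂ d Lf)ᵀ * Amat m₁ m₂ d Lf) (X s)} :
          Set (EuclideanSpace ℝ (Fin (3 * m₁ * m₂) × Fin d)))),
      ∃ p, IsProx η (gfun m₁ m₂ d β) ξ p ∧
        X t ∈ Submodule.span ℝ ({ξ, p} : Set (EuclideanSpace ℝ (Fin (3 * m₁ * m₂) × Fin d)))

/-- The pair of sequences (X, Y) follows Algorithm Class 2 on the splitting
reformulation (SP) of instance 𝒫. -/
def FollowsAC2 (m₁ m₂ d : ℕ) (Lf ε β : ℝ)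
    (X : ℕ → EuclideanSpace ℝ (Fin (3 * m₁ * m₂) × Fin d))
    (Y : ℕ → EuclideanSpace ℝ (Fin (3 * m₂ - 1) × Fin d)) : Prop :=
  X 0 = 0 ∧ Y 0 = 0 ∧ ∀ t, 1 ≤ t →
    (X t ∈ Submodule.span ℝ (⋃ s ∈ Set.Iio t,
      ({X s, gradient (f0 (3 * m₁ * m₂) Lf ε) (X s),
        mvec ((Amat m₁ m₂ d Lf)ᵀ * Amat m₁ m₂ d Lf) (X s),
        mvec ((Abar m₁ m₂ d Lf)ᵀ * Abar m₁ m₂ d Lf) (X s),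
        mvec (Abar m₁ m₂ d Lf)ᵀ (Y s)} :
          Set (EuclideanSpace ℝ (Fin (3 * m₁ * m₂) × Fin d))))) ∧
    ∃ η : ℝ, 0 < η ∧
      ∃ ξ ∈ Submodule.span ℝ (⋃ s ∈ Set.Iio t,
        ({Y s, mvec (Abar m₁ m₂ d Lf * (Abar m₁ m₂ d Lf)ᵀ) (Y s),
          mvec (Abar m₁ m₂ d Lf) (X s)} :
            Set (EuclideanSpace ℝ (Fin (3 * m₂ - 1) × Fin d)))),
        ∃ p, IsProx η (gbar m₁ m₂ d Lf β) ξ p ∧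
          Y t ∈ Submodule.span ℝ
            ({ξ, p} : Set (EuclideanSpace ℝ (Fin (3 * m₂ - 1) × Fin d)))

lemma mset_spec {m₁ m₂ k : ℕ} (h : k ∈ Mset m₁ m₂) :
    ∃ a, 1 ≤ a ∧ a ≤ 3 * m₂ - 1 ∧ k = a * m₁ := by
  simp only [Mset, Finset.mem_image, Finset.mem_Icc] at h
  obtain ⟨a, ⟨h1, h2⟩, h3⟩ := h
  exact ⟨a, h1, h2, h3.symm⟩

lemma mset_lb {m₁ m₂ k : ℕ} (hm₁ : 2 ≤ m₁) (h : k ∈ Mset m₁ m₂) : 2 ≤ k := by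
  obtain ⟨a, h1, _, rfl⟩ := mset_spec h
  calc 2 ≤ m₁ := hm₁
  _ = 1 * m₁ := (one_mul _).symm
  _ ≤ a * m₁ := Nat.mul_le_mul h1 le_rfl

lemma mset_ub {m₁ m₂ k : ℕ} (hm₁ : 2 ≤ m₁) (h : k ∈ Mset m₁ m₂) :
    k + 2 ≤ 3 * m₁ * m₂ := by
  obtain ⟨a, h1, h2, rfl⟩ := mset_spec h
  have hm₂ : 1 ≤ 3 * m₂ - 1 := le_trans h1 h2
  have h3 : a * m₁ + m₁ ≤ (3 * m₂ - 1) * m₁ + m₁ :=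
    Nat.add_le_add_right (Nat.mul_le_mul h2 le_rfl) _
  have h4 : (3 * m₂ - 1) * m₁ + m₁ = 3 * m₂ * m₁ := by
    have h5 : 3 * m₂ - 1 + 1 = 3 * m₂ := by omega
    calc (3 * m₂ - 1) * m₁ + m₁ = (3 * m₂ - 1 + 1) * m₁ := by ring
    _ = 3 * m₂ * m₁ := by rw [h5]
  have h6 : 3 * m₂ * m₁ = 3 * m₁ * m₂ := by ring
  omega

lemma mset_succ_not {m₁ m₂ k : ℕ} (hm₁ : 2 ≤ m₁) (h : k ∈ Mset m₁ m₂) :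
    k + 1 ∉ Mset m₁ m₂ := by
  intro h2
  obtain ⟨a, ha1, _, hae⟩ := mset_spec h
  obtain ⟨b, hb1, _, hbe⟩ := mset_spec h2
  have hab : a < b := by
    by_contra hc
    push_neg at hc
    have := Nat.mul_le_mul hc (le_refl m₁)
    omega
  have h3 := Nat.mul_le_mul (by omega : a + 1 ≤ b) (le_refl m₁)
  have h4 : (a + 1) * m₁ = a * m₁ + m₁ := by ring
  omega

lemma esq {ι : Type*} [Fintype ι] (v : EuclideanSpace ℝ ι) : ‖v‖ ^ 2 = ∑ i, v i ^ 2 := by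
  rw [EuclideanSpace.norm_eq, Real.sq_sqrt (Finset.sum_nonneg fun i _ => sq_nonneg _)]
  simp [Real.norm_eq_abs, sq_abs]

lemma blkN_apply {m d : ℕ} (x : EuclideanSpace ℝ (Fin m × Fin d)) {i : ℕ}
    (h1 : 1 ≤ i) (h2 : i - 1 < m) (j : Fin d) :
    blkN x i j = x (⟨i - 1, h2⟩, j) := by
  simp only [blkN]
  rw [dif_pos ⟨h1, h2⟩]

lemma fin_eq_mk {n a : ℕ} (s : Fin n) (h2 : a < n) (h : s.val = a) :
    s = (⟨a, h2⟩ : Fin n) := Fin.ext h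

lemma prox_support {m₁ m₂ d : ℕ} (hm₁ : 2 ≤ m₁) {β η : ℝ} (hβ : 0 ≤ β) (hη : 0 < η)
    {x p : EuclideanSpace ℝ (Fin (3 * m₁ * m₂) × Fin d)}
    (hp : IsProx η (gfun m₁ m₂ d β) x p)
    (B : Finset (Fin (3 * m₁ * m₂))) (j : Fin d)
    (hx : ∀ s ∈ B, x (s, j) = 0)
    (hB : ∀ k ∈ Mset m₁ m₂, ∀ s ∈ B, (s.val + 1 = k ∨ s.val = k) →
      ∀ t : Fin (3 * m₁ * m₂), (t.val + 1 = k ∨ t.val = k) → t ∈ B) :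
    ∀ s ∈ B, p (s, j) = 0 := by
  classical
  set p' : EuclideanSpace ℝ (Fin (3 * m₁ * m₂) × Fin d) :=
    WithLp.toLp 2 (fun q => if q.1 ∈ B ∧ q.2 = j then 0 else p q) with hp'def
  have hp'app : ∀ q : Fin (3 * m₁ * m₂) × Fin d,
      p' q = if q.1 ∈ B ∧ q.2 = j then 0 else p q := fun q => rfl
  -- g inequality
  have hg : gfun m₁ m₂ d β p' ≤ gfun m₁ m₂ d β p := by
    unfold gfun
    apply mul_le_mul_of_nonneg_left _ hβ
    apply Finset.sum_le_sum
    intro k hk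
    have hk2 : 2 ≤ k := mset_lb hm₁ hk
    have hkub : k + 2 ≤ 3 * m₁ * m₂ := mset_ub hm₁ hk
    have hlt1 : k - 1 < 3 * m₁ * m₂ := by omega
    have hlt2 : k + 1 - 1 < 3 * m₁ * m₂ := by omega
    unfold l1norm
    apply Finset.sum_le_sum
    intro j' _
    show |blkN p' k j' - blkN p' (k + 1) j'| ≤ |blkN p k j' - blkN p (k + 1) j'|
    rw [blkN_apply p' (by omega) hlt1 j', blkN_apply p' (by omega) hlt2 j',
        blkN_apply p (by omega) hlt1 j', blkN_apply p (by omega) hlt2 j']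
    set s1 : Fin (3 * m₁ * m₂) := ⟨k - 1, hlt1⟩ with hs1
    set s2 : Fin (3 * m₁ * m₂) := ⟨k + 1 - 1, hlt2⟩ with hs2
    have hs1v : s1.val + 1 = k := by simp only [hs1]; omega
    have hs2v : s2.val = k := by simp only [hs2]; omega
    by_cases hb : s1 ∈ B
    · have hb2 : s2 ∈ B := hB k hk s1 hb (Or.inl hs1v) s2 (Or.inr hs2v)
      by_cases hj : j' = j
      · rw [hp'app, hp'app, if_pos ⟨hb, hj⟩, if_pos ⟨hb2, hj⟩]
        simp only [sub_zero, abs_zero]; exact abs_nonneg _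
      · rw [hp'app, hp'app, if_neg (by tauto), if_neg (by tauto)]
    · have hb2 : s2 ∉ B := fun h => hb (hB k hk s2 h (Or.inr hs2v) s1 (Or.inl hs1v))
      rw [hp'app, hp'app, if_neg (by tauto), if_neg (by tauto)]
  -- norm identity
  have hkey : ∀ q : Fin (3 * m₁ * m₂) × Fin d,
      (p' q - x q) ^ 2 + (if q.1 ∈ B ∧ q.2 = j then (p q) ^ 2 else 0)
        = (p q - x q) ^ 2 := by
    intro q
    by_cases h : q.1 ∈ B ∧ q.2 = j
    · have hxq : x q = 0 := by
        have hq : q = (q.1, j) := Prod.ext rfl h.2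
        rw [hq]; exact hx q.1 h.1
      rw [hp'app, if_pos h, if_pos h, hxq]; ring
    · rw [hp'app, if_neg h, if_neg h]; ring
  have hnorm : ‖p' - x‖ ^ 2 + (∑ q, (if q.1 ∈ B ∧ q.2 = j then (p q) ^ 2 else 0))
      = ‖p - x‖ ^ 2 := by
    rw [esq, esq, ← Finset.sum_add_distrib]
    exact Finset.sum_congr rfl fun q _ => hkey q
  have hSig : (∑ q, (if q.1 ∈ B ∧ q.2 = j then (p q) ^ 2 else 0)) ≤ 0 := by
    have h2 := hp p'
    have hden : (0:ℝ) < 2 * η := by linarith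
    have h3 : ‖p - x‖ ^ 2 / (2 * η) ≤ ‖p' - x‖ ^ 2 / (2 * η) := by linarith
    have h4 : ‖p - x‖ ^ 2 ≤ ‖p' - x‖ ^ 2 := (div_le_div_iff_of_pos_right hden).mp h3
    linarith
  have hnn : ∀ q ∈ (Finset.univ : Finset (Fin (3 * m₁ * m₂) × Fin d)),
      (0:ℝ) ≤ (if q.1 ∈ B ∧ q.2 = j then (p q) ^ 2 else 0) := by
    intro q _; positivity
  have hzero := (Finset.sum_eq_zero_iff_of_nonneg hnn).mp
    (le_antisymm hSig (Finset.sum_nonneg hnn))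
  intro s hs
  have := hzero (s, j) (Finset.mem_univ _)
  rw [if_pos ⟨hs, rfl⟩] at this
  exact pow_eq_zero_iff (by norm_num) |>.mp this

/-- Support propagation of AᵀA and of prox_{ηg}: the support of block i of AᵀAx and of
prox_{ηg}(x) is contained in supp(x_{i−1}) ∪ supp(x_i) ∪ supp(x_{i+1}). -/
theorem stmt_11 (Lf ε : ℝ) (hLf : 0 < Lf) (hε0 : 0 < ε) (hε1 : ε < 1)
    (m₁ m₂ : ℕ) (hm₁ : 2 ≤ m₁) (hm₂ : 1 ≤ m₂) (heven : Even (m₁ * m₂))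
    (d : ℕ) (hd : 5 ≤ d) (hodd : Odd d)
    (β : ℝ) (hβ : (50 * π + 1 + sNorm (Amat m₁ m₂ d Lf)) * Real.sqrt (3 * m₁ * m₂) * ε < β)
    (x : EuclideanSpace ℝ (Fin (3 * m₁ * m₂) × Fin d)) :
    (∀ i, 1 ≤ i → i ≤ 3 * m₁ * m₂ → ∀ j : Fin d,
      blkN (mvec ((Amat m₁ m₂ d Lf)ᵀ * Amat m₁ m₂ d Lf) x) i j ≠ 0 →
        blkN x (i - 1) j ≠ 0 ∨ blkN x i j ≠ 0 ∨ blkN x (i + 1) j ≠ 0) ∧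
    (∀ η : ℝ, 0 < η → ∀ p, IsProx η (gfun m₁ m₂ d β) x p →
      ∀ i, 1 ≤ i → i ≤ 3 * m₁ * m₂ → ∀ j : Fin d,
        blkN p i j ≠ 0 →
          blkN x (i - 1) j ≠ 0 ∨ blkN x i j ≠ 0 ∨ blkN x (i + 1) j ≠ 0) := by
  -- basic positivity facts
  have hm6 : 6 ≤ 3 * m₁ * m₂ := by
    calc 6 = 3 * 2 * 1 := rfl
    _ ≤ 3 * m₁ * m₂ := Nat.mul_le_mul (Nat.mul_le_mul le_rfl hm₁) hm₂
  have hβ0 : 0 ≤ β := by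
    have hπ := Real.pi_pos
    have hA : 0 ≤ sNorm (Amat m₁ m₂ d Lf) := norm_nonneg _
    have h1 : (0:ℝ) ≤ 50 * π + 1 + sNorm (Amat m₁ m₂ d Lf) := by linarith
    have h2 : (0:ℝ) ≤ Real.sqrt (3 * m₁ * m₂) := Real.sqrt_nonneg _
    nlinarith [mul_nonneg (mul_nonneg h1 h2) hε0.le]
  constructor
  · -- part (a)
    intro i hi1 him j hne
    by_contra hcon
    push_neg at hcon
    obtain ⟨h0, h1, h2⟩ := hcon
    apply hne
    have hiv : i - 1 < 3 * m₁ * m₂ := by omega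
    have hzero : ∀ s : Fin (3 * m₁ * m₂),
        (s.val + 2 = i ∨ s.val + 1 = i ∨ s.val = i) → x (s, j) = 0 := by
      intro s hs
      rcases hs with h | h | h
      · have e := blkN_apply x (i := i - 1) (by omega) (by omega : i - 1 - 1 < 3 * m₁ * m₂) j
        rw [e] at h0
        have hse : s = (⟨i - 1 - 1, by omega⟩ : Fin (3 * m₁ * m₂)) := fin_eq_mk s _ (by omega)
        rw [hse]; exact h0
      · have e := blkN_apply x (i := i) hi1 hiv j
        rw [e] at h1
        have hse : s = (⟨i - 1, hiv⟩ : Fin (3 * m₁ * m₂)) := fin_eq_mk s _ (by omega)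
        rw [hse]; exact h1
      · have hlt : i + 1 - 1 < 3 * m₁ * m₂ := by have := s.isLt; omega
        have e := blkN_apply x (i := i + 1) (by omega) hlt j
        rw [e] at h2
        have hse : s = (⟨i + 1 - 1, hlt⟩ : Fin (3 * m₁ * m₂)) := fin_eq_mk s _ (by omega)
        rw [hse]; exact h2
    rw [blkN_apply _ hi1 hiv]
    show (∑ q, ((Amat m₁ m₂ d Lf)ᵀ * Amat m₁ m₂ d Lf) (⟨i - 1, hiv⟩, j) q * x q) = 0
    apply Finset.sum_eq_zero
    intro q _
    by_cases hxq : x q = 0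
    · rw [hxq, mul_zero]
    · have hsj : q.2 = j → ¬(q.1.val + 2 = i ∨ q.1.val + 1 = i ∨ q.1.val = i) := by
        intro hj hc
        apply hxq
        have hq : q = (q.1, j) := Prod.ext rfl hj
        rw [hq]
        exact hzero q.1 hc
      have hM : ((Amat m₁ m₂ d Lf)ᵀ * Amat m₁ m₂ d Lf) (⟨i - 1, hiv⟩, j) q = 0 := by
        rw [Matrix.mul_apply]
        apply Finset.sum_eq_zero
        intro r _
        rw [Matrix.transpose_apply]
        by_cases hj1 : r.2 = j
        · by_cases hj2 : r.2 = q.2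
          · have hj3 : q.2 = j := hj2 ▸ hj1
            have hne3 := hsj hj3
            push_neg at hne3
            obtain ⟨hd1, hd2, hd3⟩ := hne3
            simp only [Amat, JMC, Jmat, Matrix.smul_apply, smul_eq_mul,
              Matrix.kroneckerMap_apply, Matrix.one_apply, Matrix.of_apply,
              if_pos hj1, if_pos hj2]
            have hv1 : (⟨i - 1, hiv⟩ : Fin (3 * m₁ * m₂)).val = i - 1 := rfl
            split_ifs <;> first | (exfalso; omega) | ring
          · simp only [Amat, Matrix.smul_apply, smul_eq_mul,
              Matrix.kroneckerMap_apply, Matrix.one_apply, if_neg hj2]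
            ring
        · simp only [Amat, Matrix.smul_apply, smul_eq_mul,
            Matrix.kroneckerMap_apply, Matrix.one_apply, if_neg hj1]
          ring
      rw [hM, zero_mul]
  · -- part (b)
    intro η hη p hprox i hi1 him j hpij
    by_contra hcon
    push_neg at hcon
    obtain ⟨h0, h1, h2⟩ := hcon
    apply hpij
    have hiv : i - 1 < 3 * m₁ * m₂ := by omega
    rw [blkN_apply p hi1 hiv]
    set t : Fin (3 * m₁ * m₂) := ⟨i - 1, hiv⟩ with ht
    have htv : t.val = i - 1 := rfl
    have hxt : x (t, j) = 0 := by
      have e := blkN_apply x hi1 hiv j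
      rw [e] at h1; exact h1
    by_cases hA : i ∈ Mset m₁ m₂
    · -- case A : pair (i, i+1)
      have hub := mset_ub hm₁ hA
      have hlt : i < 3 * m₁ * m₂ := by omega
      set t2 : Fin (3 * m₁ * m₂) := ⟨i, hlt⟩ with ht2
      have ht2v : t2.val = i := rfl
      have hxt2 : x (t2, j) = 0 := by
        have e := blkN_apply x (i := i + 1) (by omega) (by omega : i + 1 - 1 < 3 * m₁ * m₂) j
        rw [e] at h2
        have : t2 = (⟨i + 1 - 1, by omega⟩ : Fin (3 * m₁ * m₂)) := fin_eq_mk t2 _ (by omega)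
        rw [this]; exact h2
      refine prox_support hm₁ hβ0 hη hprox {t, t2} j ?_ ?_ t (by simp)
      · intro s hs
        rcases Finset.mem_insert.mp hs with h | h
        · rw [h]; exact hxt
        · rw [Finset.mem_singleton.mp h]; exact hxt2
      · intro k hk s hsB hcase u hu
        have hsv : s.val = i - 1 ∨ s.val = i := by
          rcases Finset.mem_insert.mp hsB with h | h
          · left; rw [h]
          · right; rw [Finset.mem_singleton.mp h]
        have hki : k = i := by
          rcases hcase with h | h
          · rcases hsv with h' | h'
            · omega
            · exfalso
              have hk1 : i + 1 = k := by omega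
              exact mset_succ_not hm₁ hA (by rw [hk1]; exact hk)
          · rcases hsv with h' | h'
            · exfalso
              have hk1 : k + 1 = i := by omega
              exact mset_succ_not hm₁ hk (by rw [hk1]; exact hA)
            · omega
        rcases hu with h | h
        · have : u = t := fin_eq_mk u _ (by omega)
          rw [this]; exact Finset.mem_insert_self _ _
        · have : u = t2 := fin_eq_mk u _ (by omega)
          rw [this]; exact Finset.mem_insert.mpr (Or.inr (Finset.mem_singleton_self _))
    · by_cases hA2 : i - 1 ∈ Mset m₁ m₂
      · -- case B : pair (i-1, i)
        have hlb := mset_lb hm₁ hA2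
        have hlt3 : i - 2 < 3 * m₁ * m₂ := by omega
        set t0 : Fin (3 * m₁ * m₂) := ⟨i - 2, hlt3⟩ with ht0
        have ht0v : t0.val = i - 2 := rfl
        have hxt0 : x (t0, j) = 0 := by
          have e := blkN_apply x (i := i - 1) (by omega) (by omega : i - 1 - 1 < 3 * m₁ * m₂) j
          rw [e] at h0
          have : t0 = (⟨i - 1 - 1, by omega⟩ : Fin (3 * m₁ * m₂)) := fin_eq_mk t0 _ (by omega)
          rw [this]; exact h0
        refine prox_support hm₁ hβ0 hη hprox {t0, t} j ?_ ?_ t (by simp)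
        · intro s hs
          rcases Finset.mem_insert.mp hs with h | h
          · rw [h]; exact hxt0
          · rw [Finset.mem_singleton.mp h]; exact hxt
        · intro k hk s hsB hcase u hu
          have hsv : s.val = i - 2 ∨ s.val = i - 1 := by
            rcases Finset.mem_insert.mp hsB with h | h
            · left; rw [h]
            · right; rw [Finset.mem_singleton.mp h]
          have hki : k = i - 1 := by
            rcases hcase with h | h
            · rcases hsv with h' | h'
              · omega
              · exfalso
                have hk1 : i = k := by omega
                exact hA (by rw [hk1]; exact hk)
            · rcases hsv with h' | h'
              · exfalso
                have hk1 : k + 1 = i - 1 := by omega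
                exact mset_succ_not hm₁ hk (by rw [hk1]; exact hA2)
              · omega
          rcases hu with h | h
          · have : u = t0 := fin_eq_mk u _ (by omega)
            rw [this]; exact Finset.mem_insert_self _ _
          · have : u = t := fin_eq_mk u _ (by omega)
            rw [this]; exact Finset.mem_insert.mpr (Or.inr (Finset.mem_singleton_self _))
      · -- case C : block i in no pair
        refine prox_support hm₁ hβ0 hη hprox {t} j ?_ ?_ t (Finset.mem_singleton_self _)
        · intro s hs
          rw [Finset.mem_singleton.mp hs]; exact hxt
        · intro k hk s hsB hcase u hu
          exfalso
          have hsv : s.val = i - 1 := by rw [Finset.mem_singleton.mp hsB]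
          rcases hcase with h | h
          · exact hA (by rw [show k = i by omega] at hk; exact hk)
          · exact hA2 (by rw [show k = i - 1 by omega] at hk; exact hk)

end
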